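/- arXiv:2605.04465 — 2 statements merged into one kernel-verified Lean document; each statement's English description precedes it below -/
import Mathlib

section
/- Let w be a natural number, s > 0 a real number, and W : Fin w → ℝ a vector with 4·|W_j| ≤ s for every coordinate j. For each z ∈ {0,1}^w define the candidate predecessor P_z := W − s·z (coordinatewise). Then: (a) every candidate is valid, i.e., for each j, if z_j = 1 then |P_z(j) + s| ≤ |P_z(j)|, and if z_j = 0 then |P_z(j)| ≤ |P_z(j) + s|; and (b) the map z ↦ P_z is injective, so there are at least 2^w distinct valid predecessors of W. -/
/-- Non-invertibility of a beam iteration: if the step size `s` satisfies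
`4·|W_j| ≤ s` in every coordinate, then every selection vector `z ∈ {0,1}^w`
yields a valid predecessor `P_z = W − s·z` (each coordinate's retained choice is
the one closest to the target `0`), and the map `z ↦ P_z` is injective, giving at
least `2^w` distinct valid predecessors. -/
theorem beam_predecessors_ambiguous (w : ℕ) (s : ℝ) (hs : 0 < s)
    (W : Fin w → ℝ) (hW : ∀ j, 4 * |W j| ≤ s)
    (P : (Fin w → Bool) → (Fin w → ℝ))
    (hP : ∀ z j, P z j = W j - s * (if z j then 1 else 0)) :
    (∀ z : Fin w → Bool, ∀ j : Fin w,
        (z j = true → |P z j + s| ≤ |P z j|) ∧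
        (z j = false → |P z j| ≤ |P z j + s|)) ∧
    Function.Injective P := by
  constructor
  · intro z j
    have h := hW j
    have hWj := abs_nonneg (W j)
    constructor
    · intro hz
      rw [hP, hz]
      simp only [if_true]
      have h1 : |W j - s * 1 + s| = |W j| := by ring_nf
      have h2 : s - |W j| ≤ |W j - s * 1| := by
        have := abs_sub_abs_le_abs_sub (s * 1) (W j)
        rw [abs_sub_comm] at this
        have hsabs : |s * 1| = s := by rw [mul_one, abs_of_pos hs]
        linarith
      rw [h1]; linarith
    · intro hz
      rw [hP, hz]
      simp only [Bool.false_eq_true, if_false]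
      have h1 : |W j - s * 0| = |W j| := by ring_nf
      have h2 : s - |W j| ≤ |W j - s * 0 + s| := by
        have := abs_sub_abs_le_abs_sub s (W j - s * 0 + s)
        have h3 : |s - (W j - s * 0 + s)| = |W j| := by
          rw [show s - (W j - s * 0 + s) = -(W j) by ring, abs_neg]
        rw [abs_of_pos hs] at this
        linarith
      rw [h1]; linarith
  · intro z z' hzz
    funext j
    have := congrFun hzz j
    rw [hP, hP] at this
    by_cases h1 : z j <;> by_cases h2 : z' j <;>
      simp [h1, h2] at this ⊢ <;> linarith
end

section
/- Let d ≥ 1 be a natural number, k > 0, and let (z_t) be the real sequence defined by z_{t+1} = z_t − k·z_t^{d+1} with initial value z_0 satisfying 0 < z_0 and k·z_0^d < 1. Then for every t: 0 < z_t and k·z_t^d < 1; the transformed sequence satisfies z_{t+1}^{−d} ≥ z_t^{−d} + d·k; and consequently z_t ≤ z_0·(1 + d·k·z_0^d·t)^{−1/d}. -/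
/-- Discrete decay bound in dimension `d`: for the deterministic recursion
`z_{t+1} = z_t − k·z_t^{d+1}` with `0 < z_0` and `k·z_0^d < 1`, every iterate
stays positive with `k·z_t^d < 1`, the transformed sequence satisfies
`z_{t+1}^{−d} ≥ z_t^{−d} + d·k`, and consequently
`z_t ≤ z_0·(1 + d·k·z_0^d·t)^{−1/d}`. -/
theorem discrete_decay_bound_dim (d : ℕ) (hd : 1 ≤ d) (k : ℝ) (hk : 0 < k)
    (z : ℕ → ℝ) (hrec : ∀ t : ℕ, z (t + 1) = z t - k * z t ^ (d + 1))
    (h0 : 0 < z 0) (h0' : k * z 0 ^ d < 1) :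
    ∀ t : ℕ,
      (0 < z t ∧ k * z t ^ d < 1) ∧
      (z (t + 1)) ^ (-(d : ℝ)) ≥ (z t) ^ (-(d : ℝ)) + d * k ∧
      z t ≤ z 0 * (1 + d * k * z 0 ^ d * t) ^ (-(1 : ℝ) / d) := by
  have hdR : (0 : ℝ) < d := by exact_mod_cast hd
  -- invariant
  have inv : ∀ t : ℕ, 0 < z t ∧ k * z t ^ d < 1 := by
    intro t
    induction t with
    | zero => exact ⟨h0, h0'⟩
    | succ n ih =>
      obtain ⟨hp, hu⟩ := ih
      have hz1 : z (n + 1) = z n * (1 - k * z n ^ d) := by rw [hrec]; ring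
      have hpos : 0 < z (n + 1) := by
        rw [hz1]; exact mul_pos hp (by linarith)
      have hle : z (n + 1) ≤ z n := by
        rw [hz1]
        nlinarith [mul_pos hp (mul_pos hk (pow_pos hp d))]
      refine ⟨hpos, ?_⟩
      have : z (n + 1) ^ d ≤ z n ^ d := pow_le_pow_left₀ hpos.le hle d
      nlinarith
  -- step inequality in inverse-pow form
  have step : ∀ t : ℕ, (z t ^ d)⁻¹ + d * k ≤ (z (t + 1) ^ d)⁻¹ := by
    intro t
    obtain ⟨hp, hu1⟩ := inv t
    obtain ⟨hp', _⟩ := inv (t + 1)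
    set u : ℝ := k * z t ^ d with hu
    have hu0 : 0 < u := mul_pos hk (pow_pos hp d)
    have hz1 : z (t + 1) = z t * (1 - u) := by rw [hrec, hu]; ring
    have b1 : 1 + (d : ℝ) * u ≤ (1 + u) ^ d := one_add_mul_le_pow (by linarith) d
    have hpow_nonneg : (0 : ℝ) ≤ (1 - u) ^ d := pow_nonneg (by linarith) d
    have b3 : (1 - u ^ 2) ^ d ≤ 1 := pow_le_one₀ (by nlinarith) (by nlinarith)
    have key2 : (1 + (d : ℝ) * u) * (1 - u) ^ d ≤ 1 := by
      calc (1 + (d : ℝ) * u) * (1 - u) ^ d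
          ≤ (1 + u) ^ d * (1 - u) ^ d := by
            apply mul_le_mul_of_nonneg_right b1 hpow_nonneg
        _ = (1 - u ^ 2) ^ d := by rw [← mul_pow]; ring_nf
        _ ≤ 1 := b3
    have hb : 0 < z (t + 1) ^ d := pow_pos hp' d
    rw [inv_eq_one_div (z (t + 1) ^ d), le_div_iff₀ hb]
    have hexp : z (t + 1) ^ d = z t ^ d * (1 - u) ^ d := by rw [hz1, mul_pow]
    have hzd : (0 : ℝ) < z t ^ d := pow_pos hp d
    have hrewrite : ((z t ^ d)⁻¹ + d * k) * (z (t + 1) ^ d)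
        = (1 + (d : ℝ) * u) * (1 - u) ^ d := by
      rw [hexp, hu]
      field_simp
    rw [hrewrite]; exact key2
  -- accumulated bound
  have hacc : ∀ t : ℕ, (z 0 ^ d)⁻¹ + d * k * t ≤ (z t ^ d)⁻¹ := by
    intro t
    induction t with
    | zero => simp
    | succ n ih =>
      have := step n
      push_cast
      push_cast at ih
      linarith
  intro t
  obtain ⟨hp, hu1⟩ := inv t
  refine ⟨⟨hp, hu1⟩, ?_, ?_⟩
  · -- rewrite rpow into inverse pow
    obtain ⟨hp', _⟩ := inv (t + 1)
    have e1 : z (t + 1) ^ (-(d : ℝ)) = (z (t + 1) ^ d)⁻¹ := by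
      rw [Real.rpow_neg hp'.le, Real.rpow_natCast]
    have e2 : z t ^ (-(d : ℝ)) = (z t ^ d)⁻¹ := by
      rw [Real.rpow_neg hp.le, Real.rpow_natCast]
    rw [ge_iff_le, e1, e2]
    exact step t
  · -- final decay bound
    set A : ℝ := (d : ℝ) * k * z 0 ^ d * t with hA
    have hA0 : 0 ≤ A := by
      have : (0 : ℝ) ≤ (t : ℝ) := Nat.cast_nonneg t
      positivity
    have hz0d : (0 : ℝ) < z 0 ^ d := pow_pos h0 d
    have h1A : (0 : ℝ) < 1 + A := by linarith
    have hbound : (1 + A) / z 0 ^ d ≤ (z t ^ d)⁻¹ := by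
      have := hacc t
      have : (1 + A) / z 0 ^ d = (z 0 ^ d)⁻¹ + d * k * t := by
        rw [hA]; field_simp
      linarith [hacc t, this.le, this.ge]
    have hztd : 0 < z t ^ d := pow_pos hp d
    have hqpos : (0 : ℝ) < (1 + A) / z 0 ^ d := div_pos h1A hz0d
    have hmain : z t ^ d ≤ z 0 ^ d * (1 + A)⁻¹ := by
      have h2 := inv_anti₀ hqpos hbound
      rw [inv_inv] at h2
      calc z t ^ d ≤ ((1 + A) / z 0 ^ d)⁻¹ := h2
        _ = z 0 ^ d * (1 + A)⁻¹ := by rw [inv_div]; ring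
    have hd0 : d ≠ 0 := by omega
    have erec : z t = (z t ^ d) ^ ((d : ℝ)⁻¹) := by
      rw [Real.pow_rpow_inv_natCast hp.le hd0]
    have erec0 : (z 0 ^ d) ^ ((d : ℝ)⁻¹) = z 0 := Real.pow_rpow_inv_natCast h0.le hd0
    calc z t = (z t ^ d) ^ ((d : ℝ)⁻¹) := erec
      _ ≤ (z 0 ^ d * (1 + A)⁻¹) ^ ((d : ℝ)⁻¹) :=
          Real.rpow_le_rpow hztd.le hmain (by positivity)
      _ = (z 0 ^ d) ^ ((d : ℝ)⁻¹) * ((1 + A)⁻¹) ^ ((d : ℝ)⁻¹) :=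
          Real.mul_rpow hz0d.le (by positivity)
      _ = z 0 * (1 + A) ^ (-(1 : ℝ) / d) := by
          rw [erec0, Real.inv_rpow h1A.le, ← Real.rpow_neg h1A.le, neg_div, one_div]
end
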